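/- arXiv:1312.3019 — 3 statements merged into one kernel-verified Lean document; each statement's English description precedes it below -/
import Mathlib

section
/- Let Ω ⊂ ℝ³ be a bounded open set, p > 3, and let φ ∈ W^{1,p}(Ω, ℝ³) be continuous with det ∇φ(x) ≥ δ₀ > 0 a.e. and satisfy the Ciarlet–Nečas condition ∫_Ω det ∇φ dx ≤ |φ(Ω)|. Then N(φ, y) = 1 for a.e. y ∈ φ(Ω), where N(φ,y) is the number of preimages of y under φ in Ω. -/
/-!
With `g = 1` the area formula turns the Ciarlet–Nečas condition into `∫_{φ(Ω)} N ≤ |φ(Ω)|`.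
Since `N ≥ 1` on `φ(Ω)` and `N ≥ 2` on the set `D` of double points, this gives
`|φ(Ω)| + |D| ≤ |φ(Ω)|`, hence `|D| = 0` as `|φ(Ω)| < ∞`. The only subtlety is that `D` is
measurable: it is the continuous image of a σ-compact subset of `Ω × Ω` off the diagonal.
-/

open MeasureTheory Set
open scoped ENNReal

section SigmaCompact

variable {X Y : Type*} [TopologicalSpace X] [TopologicalSpace Y]

lemma IsOpen.isSigmaCompact [LocallyCompactSpace X] [SecondCountableTopology X] {U : Set X}
    (hU : IsOpen U) : IsSigmaCompact U :=
  have := hU.locallyCompactSpace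
  isSigmaCompact_iff_sigmaCompactSpace.mpr inferInstance

lemma IsSigmaCompact.measurableSet [T2Space X] [MeasurableSpace X] [OpensMeasurableSpace X]
    {s : Set X} (hs : IsSigmaCompact s) : MeasurableSet s := by
  obtain ⟨K, hK, rfl⟩ := hs
  exact .iUnion fun n => (hK n).measurableSet

lemma IsSigmaCompact.inter_preimage [T2Space X] {s : Set X} {t : Set Y} {g : X → Y}
    (hs : IsSigmaCompact s) (hg : ContinuousOn g s) (ht : IsClosed t) :
    IsSigmaCompact (s ∩ g ⁻¹' t) := by
  obtain ⟨K, hK, rfl⟩ := hs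
  refine ⟨fun n => K n ∩ g ⁻¹' t, fun n => ?_, (iUnion_inter _ _).symm⟩
  have hclosed : IsClosed (K n ∩ g ⁻¹' t) :=
    (hg.mono (subset_iUnion K n)).preimage_isClosed_of_isClosed (hK n).isClosed ht
  exact (hK n).of_isClosed_subset hclosed inter_subset_left

end SigmaCompact

section DoublePoints

variable {X Y : Type*}

def doublePoints (f : X → Y) (s : Set X) : Set Y :=
  {y | ∃ x₁ ∈ s, ∃ x₂ ∈ s, x₁ ≠ x₂ ∧ f x₁ = y ∧ f x₂ = y}

lemma doublePoints_subset_image (f : X → Y) (s : Set X) : doublePoints f s ⊆ f '' s :=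
  fun _ ⟨x₁, hx₁, _, _, _, hy, _⟩ => ⟨x₁, hx₁, hy⟩

lemma doublePoints_eq_image (f : X → Y) (s : Set X) :
    doublePoints f s = (fun q : X × X => f q.1) ''
      ((s ×ˢ s \ diagonal X) ∩ (fun q : X × X => (f q.1, f q.2)) ⁻¹' diagonal Y) := by
  ext y
  constructor
  · rintro ⟨x₁, hx₁, x₂, hx₂, hne, rfl, h₂⟩
    exact ⟨(x₁, x₂), ⟨⟨⟨hx₁, hx₂⟩, hne⟩, h₂.symm⟩, rfl⟩
  · rintro ⟨⟨x₁, x₂⟩, ⟨⟨⟨hx₁, hx₂⟩, hne⟩, heq⟩, rfl⟩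
    exact ⟨x₁, hx₁, x₂, hx₂, hne, rfl, heq.symm⟩

lemma one_lt_encard_iff_mem_doublePoints {f : X → Y} {s : Set X} {y : Y} :
    1 < {x | x ∈ s ∧ f x = y}.encard ↔ y ∈ doublePoints f s := by
  simp only [one_lt_encard_iff, mem_ofPred_eq, doublePoints]
  constructor
  · rintro ⟨a, b, ⟨ha, hfa⟩, ⟨hb, hfb⟩, hab⟩
    exact ⟨a, ha, b, hb, hab, hfa, hfb⟩
  · rintro ⟨a, ha, b, hb, hab, hfa, hfb⟩
    exact ⟨a, b, ⟨ha, hfa⟩, ⟨hb, hfb⟩, hab⟩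

lemma encard_eq_one_of_notMem_doublePoints {f : X → Y} {s : Set X} {y : Y} (hy : y ∈ f '' s)
    (hyD : y ∉ doublePoints f s) : {x | x ∈ s ∧ f x = y}.encard = 1 := by
  obtain ⟨x, hx, rfl⟩ := hy
  refine le_antisymm ?_ (one_le_encard_iff_nonempty.mpr ⟨x, hx, rfl⟩)
  exact not_lt.mp (one_lt_encard_iff_mem_doublePoints.not.mpr hyD)

lemma one_add_indicator_doublePoints_le_encard {f : X → Y} {s : Set X} {y : Y}
    (hy : y ∈ f '' s) :
    1 + (doublePoints f s).indicator 1 y ≤ ({x | x ∈ s ∧ f x = y}.encard : ℝ≥0∞) := by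
  by_cases hyD : y ∈ doublePoints f s
  · have h2 : 2 ≤ {x | x ∈ s ∧ f x = y}.encard :=
      Order.add_one_le_of_lt (one_lt_encard_iff_mem_doublePoints.mpr hyD)
    rw [indicator_of_mem hyD, Pi.one_apply, one_add_one_eq_two]
    exact_mod_cast h2
  · rw [indicator_of_notMem hyD, add_zero, encard_eq_one_of_notMem_doublePoints hy hyD]
    simp

variable [TopologicalSpace X] [TopologicalSpace Y] [T2Space X] [T2Space Y]
  [LocallyCompactSpace X] [SecondCountableTopology X]

lemma IsOpen.isSigmaCompact_doublePoints {f : X → Y} {s : Set X} (hs : IsOpen s)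
    (hf : ContinuousOn f s) : IsSigmaCompact (doublePoints f s) := by
  have hW : IsSigmaCompact (s ×ˢ s \ diagonal X) :=
    ((hs.prod hs).sdiff isClosed_diagonal).isSigmaCompact
  have hfst : ContinuousOn (fun q : X × X => f q.1) (s ×ˢ s \ diagonal X) :=
    hf.comp continuous_fst.continuousOn fun q hq => hq.1.1
  have hsnd : ContinuousOn (fun q : X × X => f q.2) (s ×ˢ s \ diagonal X) :=
    hf.comp continuous_snd.continuousOn fun q hq => hq.1.2
  rw [doublePoints_eq_image]
  exact (hW.inter_preimage (hfst.prodMk hsnd) isClosed_diagonal).image_of_continuousOn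
    (hfst.mono inter_subset_left)

end DoublePoints

lemma measure_eq_zero_of_setLIntegral_le {α : Type*} [MeasurableSpace α] {μ : Measure α}
    {s S : Set α} {N : α → ℝ≥0∞} (hs : MeasurableSet s) (hS : MeasurableSet S) (hSs : S ⊆ s)
    (hμs : μ s ≠ ∞) (hN : ∀ y ∈ s, 1 + S.indicator 1 y ≤ N y) (hint : ∫⁻ y in s, N y ∂μ ≤ μ s) :
    μ S = 0 := by
  have hlower : μ s + μ S ≤ ∫⁻ y in s, N y ∂μ :=
    calc μ s + μ S = ∫⁻ y in s, 1 + S.indicator 1 y ∂μ := by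
          rw [lintegral_add_left measurable_const, setLIntegral_one, lintegral_indicator_one hS,
            Measure.restrict_apply hS, inter_eq_left.mpr hSs]
      _ ≤ ∫⁻ y in s, N y ∂μ := setLIntegral_mono' hs hN
  have : μ s + μ S ≤ μ s + 0 := by rw [add_zero]; exact hlower.trans hint
  exact nonpos_iff_eq_zero.mp ((ENNReal.add_le_add_iff_left hμs).mp this)

theorem injectivity_ae_of_ciarlet_necas_general
    (Ω : Set (Fin 3 → ℝ)) (hΩopen : IsOpen Ω) (hΩbd : Bornology.IsBounded Ω)
    (φ : (Fin 3 → ℝ) → (Fin 3 → ℝ)) (hφcont : ContinuousOn φ (closure Ω))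
    (J : (Fin 3 → ℝ) → ℝ)
    (N : (Fin 3 → ℝ) → ℝ≥0∞)
    (hN : ∀ y, N y = ({x | x ∈ Ω ∧ φ x = y}.encard : ℝ≥0∞))
    (area_formula : ∀ g : (Fin 3 → ℝ) → ℝ≥0∞, Measurable g →
      ∫⁻ y in φ '' Ω, N y * g y ∂volume
        = ∫⁻ x in Ω, g (φ x) * ENNReal.ofReal (J x) ∂volume)
    (ciarlet_necas : ∫⁻ x in Ω, ENNReal.ofReal (J x) ∂volume ≤ volume (φ '' Ω)) :
    ∀ᵐ y ∂(volume.restrict (φ '' Ω)), N y = 1 := by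
  have hφΩ : ContinuousOn φ Ω := hφcont.mono subset_closure
  have himage : MeasurableSet (φ '' Ω) :=
    (hΩopen.isSigmaCompact.image_of_continuousOn hφΩ).measurableSet
  have himage_fin : volume (φ '' Ω) ≠ ∞ :=
    (measure_mono (image_mono subset_closure)).trans_lt
      (hΩbd.isCompact_closure.image_of_continuousOn hφcont).measure_lt_top |>.ne
  have hint : ∫⁻ y in φ '' Ω, N y ≤ volume (φ '' Ω) :=
    calc ∫⁻ y in φ '' Ω, N y = ∫⁻ x in Ω, ENNReal.ofReal (J x) := by
          simpa using area_formula 1 measurable_one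
      _ ≤ volume (φ '' Ω) := ciarlet_necas
  have hD : volume (doublePoints φ Ω) = 0 :=
    measure_eq_zero_of_setLIntegral_le himage
      (hΩopen.isSigmaCompact_doublePoints hφΩ).measurableSet (doublePoints_subset_image φ Ω)
      himage_fin (fun y hy => hN y ▸ one_add_indicator_doublePoints_le_encard hy) hint
  filter_upwards [ae_restrict_mem himage,
    ae_restrict_of_ae (measure_eq_zero_iff_ae_notMem.mp hD)] with y hy hyD
  rw [hN, encard_eq_one_of_notMem_doublePoints hy hyD, ENat.toENNReal_one]

/-- If `φ ∈ W^{1,p}(Ω, ℝ³)`, `p > 3`, is continuous with Jacobian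
`det ∇φ ≥ δ₀ > 0` a.e. (so that the area formula with multiplicity function
`N(φ,y) = #{x ∈ Ω : φ x = y}` holds) and satisfies the Ciarlet–Nečas condition
`∫_Ω det ∇φ ≤ |φ(Ω)|`, then `N(φ, y) = 1` for a.e. `y ∈ φ(Ω)`. -/
theorem injectivity_ae_of_ciarlet_necas
    (Ω : Set (Fin 3 → ℝ)) (hΩopen : IsOpen Ω) (hΩbd : Bornology.IsBounded Ω)
    (p : ℝ) (hp : 3 < p)
    (φ : (Fin 3 → ℝ) → (Fin 3 → ℝ)) (hφcont : ContinuousOn φ (closure Ω))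
    (J : (Fin 3 → ℝ) → ℝ) (hJmeas : Measurable J)
    (δ₀ : ℝ) (hδ₀ : 0 < δ₀) (hJ : ∀ᵐ x ∂(volume.restrict Ω), δ₀ ≤ J x)
    (N : (Fin 3 → ℝ) → ℝ≥0∞)
    (hN : ∀ y, N y = ({x | x ∈ Ω ∧ φ x = y}.encard : ℝ≥0∞))
    (area_formula : ∀ g : (Fin 3 → ℝ) → ℝ≥0∞, Measurable g →
      ∫⁻ y in φ '' Ω, N y * g y ∂volume
        = ∫⁻ x in Ω, g (φ x) * ENNReal.ofReal (J x) ∂volume)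
    (ciarlet_necas : ∫⁻ x in Ω, ENNReal.ofReal (J x) ∂volume ≤ volume (φ '' Ω)) :
    ∀ᵐ y ∂(volume.restrict (φ '' Ω)), N y = 1 :=
  injectivity_ae_of_ciarlet_necas_general Ω hΩopen hΩbd φ hφcont J N hN area_formula ciarlet_necas
end

section
/- Let Ω ⊂ ℝ³ be bounded open, and let φ_k, φ : Ω̄ → ℝ³ be continuous maps with φ_k → φ uniformly on Ω and |φ(∂Ω)| = 0. Then limsup_{k→∞} |φ_k(Ω)| ≤ |φ(Ω)|. -/
open MeasureTheory Filter
open scoped ENNReal Topology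

/-! Eventually every image `φ_k(Ω)` lies in the `r`-thickening of `φ(Ω)`, so the limsup is bounded
by the measure of every such thickening, whose infimum over `r > 0` is `|closure φ(Ω)|`. Since
`Ω̄` is compact, `closure φ(Ω) ⊆ φ(Ω̄) = φ(Ω) ∪ φ(∂Ω)`, and `φ(∂Ω)` is null. -/

open Metric Set

theorem TendstoUniformlyOn.limsup_measure_image_le_measure_closure
    {ι β α : Type*} [PseudoMetricSpace α] [MeasurableSpace α] [OpensMeasurableSpace α]
    {μ : Measure α} {l : Filter ι} {F : ι → β → α} {f : β → α} {s : Set β}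
    (h : TendstoUniformlyOn F f l s) (hfin : ∃ R > 0, μ (thickening R (f '' s)) ≠ ∞) :
    limsup (fun k => μ (F k '' s)) l ≤ μ (closure (f '' s)) := by
  refine ge_of_tendsto (tendsto_measure_thickening hfin) ?_
  filter_upwards [self_mem_nhdsWithin] with r (hr : 0 < r)
  refine limsup_le_of_le (by isBoundedDefault) ?_
  filter_upwards [tendstoUniformlyOn_iff.mp h r hr] with k hk
  refine measure_mono ?_
  rintro _ ⟨x, hx, rfl⟩
  exact mem_thickening_iff.mpr ⟨f x, mem_image_of_mem f hx, (dist_comm _ _).trans_lt (hk x hx)⟩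

theorem IsCompact.closure_image_subset_image_closure
    {X Y : Type*} [TopologicalSpace X] [TopologicalSpace Y] [T2Space Y] {f : X → Y} {s : Set X}
    (hs : IsCompact (closure s)) (hf : ContinuousOn f (closure s)) :
    closure (f '' s) ⊆ f '' closure s :=
  closure_minimal (image_mono subset_closure) (hs.image_of_continuousOn hf).isClosed

theorem measure_closure_image_le_add_measure_image_frontier
    {X Y : Type*} [TopologicalSpace X] [TopologicalSpace Y] [T2Space Y] [MeasurableSpace Y]
    (μ : Measure Y) {f : X → Y} {s : Set X}
    (hs : IsCompact (closure s)) (hf : ContinuousOn f (closure s)) :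
    μ (closure (f '' s)) ≤ μ (f '' s) + μ (f '' frontier s) := by
  refine (measure_mono ?_).trans (measure_union_le _ _)
  rw [← image_union, ← closure_eq_self_union_frontier]
  exact hs.closure_image_subset_image_closure hf

theorem limsup_image_measure_le_general
    (Ω : Set (Fin 3 → ℝ)) (hΩbd : Bornology.IsBounded Ω)
    (φ : (Fin 3 → ℝ) → (Fin 3 → ℝ)) (φs : ℕ → (Fin 3 → ℝ) → (Fin 3 → ℝ))
    (hφcont : ContinuousOn φ (closure Ω))
    (hunif : TendstoUniformlyOn φs φ atTop Ω)
    (hbdry : volume (φ '' frontier Ω) = 0) :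
    Filter.limsup (fun k => volume (φs k '' Ω)) atTop ≤ volume (φ '' Ω) := by
  have hcl : IsCompact (closure Ω) := hΩbd.isCompact_closure
  have himage : Bornology.IsBounded (φ '' Ω) :=
    (hcl.image_of_continuousOn hφcont).isBounded.subset (image_mono subset_closure)
  calc limsup (fun k => volume (φs k '' Ω)) atTop
      ≤ volume (closure (φ '' Ω)) :=
        hunif.limsup_measure_image_le_measure_closure
          ⟨1, one_pos, himage.thickening.measure_lt_top.ne⟩
    _ ≤ volume (φ '' Ω) + volume (φ '' frontier Ω) :=
        measure_closure_image_le_add_measure_image_frontier volume hcl hφcont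
    _ = volume (φ '' Ω) := by rw [hbdry, add_zero]

/-- If `φ_k → φ` uniformly on a bounded open `Ω ⊂ ℝ³`, the maps
being continuous on `Ω̄`, and `|φ(∂Ω)| = 0`, then
`limsup_k |φ_k(Ω)| ≤ |φ(Ω)|`. -/
theorem limsup_image_measure_le
    (Ω : Set (Fin 3 → ℝ)) (hΩopen : IsOpen Ω) (hΩbd : Bornology.IsBounded Ω)
    (φ : (Fin 3 → ℝ) → (Fin 3 → ℝ)) (φs : ℕ → (Fin 3 → ℝ) → (Fin 3 → ℝ))
    (hφcont : ContinuousOn φ (closure Ω))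
    (hφscont : ∀ k, ContinuousOn (φs k) (closure Ω))
    (hunif : TendstoUniformlyOn φs φ atTop Ω)
    (hbdry : volume (φ '' frontier Ω) = 0) :
    Filter.limsup (fun k => volume (φs k '' Ω)) atTop ≤ volume (φ '' Ω) :=
  limsup_image_measure_le_general Ω hΩbd φ φs hφcont hunif hbdry
end

section
/- Let Ω ⊂ ℝ³ be bounded open, p > 3, and suppose φ_k ⇀ φ weakly in W^{1,p}(Ω, ℝ³), each φ_k satisfies ∫_Ω det ∇φ_k dx ≤ |φ_k(Ω)|, and |φ(∂Ω)| = 0. Then φ also satisfies ∫_Ω det ∇φ dx ≤ |φ(Ω)|, i.e., the Ciarlet–Nečas condition is preserved under weak W^{1,p} convergence. -/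
open MeasureTheory Filter
open scoped ENNReal Topology

/-! Uniform convergence can only enlarge an image by a thin shell: `φ_k(Ω)` lies in the
`ε`-neighbourhood of the compact set `φ(Ω̄)` for large `k`, and the measures of these
neighbourhoods decrease to `|φ(Ω̄)|`, which equals `|φ(Ω)|` since `|φ(∂Ω)| = 0`. Hence
`limsup |φ_k(Ω)| ≤ |φ(Ω)|`, while testing the weak convergence of the Jacobians against `1`
gives `∫_Ω det ∇φ_k → ∫_Ω det ∇φ`; pass to the limit in `∫_Ω det ∇φ_k ≤ |φ_k(Ω)|`. -/

open Metric Set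

theorem image_subset_cthickening_image_of_forall_dist_le {α β : Type*} [PseudoMetricSpace β]
    {s : Set α} {f g : α → β} {ε : ℝ} (h : ∀ x ∈ s, dist (g x) (f x) ≤ ε) :
    g '' s ⊆ cthickening ε (f '' s) := by
  rintro _ ⟨x, hx, rfl⟩
  exact mem_cthickening_of_dist_le _ _ ε _ (mem_image_of_mem f hx) (h x hx)

theorem measure_image_closure_le_of_measure_image_frontier_eq_zero {α β : Type*}
    [TopologicalSpace α] [MeasurableSpace β] {μ : Measure β} {s : Set α} {f : α → β}
    (h : μ (f '' frontier s) = 0) : μ (f '' closure s) ≤ μ (f '' s) := by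
  calc μ (f '' closure s) = μ (f '' s ∪ f '' frontier s) := by
        rw [closure_eq_self_union_frontier, image_union]
    _ ≤ μ (f '' s) + μ (f '' frontier s) := measure_union_le _ _
    _ = μ (f '' s) := by rw [h, add_zero]

theorem limsup_measure_image_le_of_tendstoUniformlyOn {ι α β : Type*} [TopologicalSpace α]
    [MetricSpace β] [ProperSpace β] [MeasurableSpace β] [OpensMeasurableSpace β]
    {μ : Measure β} [IsFiniteMeasureOnCompacts μ] {l : Filter ι} {s : Set α}
    {F : ι → α → β} {f : α → β} (hs : IsCompact s) (hf : ContinuousOn f s)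
    (hF : TendstoUniformlyOn F f l s) :
    limsup (fun i => μ (F i '' s)) l ≤ μ (f '' s) := by
  have hK : IsCompact (f '' s) := hs.image_of_continuousOn hf
  have hshell : ∀ ε > 0, limsup (fun i => μ (F i '' s)) l ≤ μ (cthickening ε (f '' s)) :=
    fun ε hε => limsup_le_of_le (h := (tendstoUniformlyOn_iff.1 hF ε hε).mono fun i hi =>
      measure_mono <| image_subset_cthickening_image_of_forall_dist_le fun x hx =>
        (dist_comm (f x) (F i x) ▸ hi x hx).le)
  exact ge_of_tendsto ((tendsto_measure_cthickening_of_isCompact hK).mono_left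
    nhdsWithin_le_nhds) (eventually_nhdsWithin_of_forall (s := Ioi 0) hshell)

theorem le_toReal_of_tendsto_of_limsup_le {ι : Type*} {l : Filter ι} [l.NeBot] {a : ι → ℝ} {A : ℝ}
    {m : ι → ℝ≥0∞} {M : ℝ≥0∞} (ha : Tendsto a l (𝓝 A)) (ham : ∀ i, a i ≤ (m i).toReal)
    (hm : limsup m l ≤ M) (hM : M ≠ ∞) : A ≤ M.toReal := by
  refine le_of_forall_gt_imp_ge_of_dense fun c hc => ?_
  have hMc : M < ENNReal.ofReal c := (ENNReal.lt_ofReal_iff_toReal_lt hM).2 hc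
  have hmc : ∀ᶠ i in l, m i < ENNReal.ofReal c := eventually_lt_of_limsup_lt (hm.trans_lt hMc)
  exact le_of_tendsto ha <| hmc.mono fun i hi =>
    ((ham i).trans_lt (ENNReal.toReal_lt_of_lt_ofReal hi)).le

theorem ciarlet_necas_weakly_closed_general
    (Ω : Set (Fin 3 → ℝ)) (hΩbd : Bornology.IsBounded Ω)
    (φ : (Fin 3 → ℝ) → (Fin 3 → ℝ)) (φs : ℕ → (Fin 3 → ℝ) → (Fin 3 → ℝ))
    (hφcont : ContinuousOn φ (closure Ω))
    (J : (Fin 3 → ℝ) → ℝ) (Js : ℕ → (Fin 3 → ℝ) → ℝ)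
    (hunif : TendstoUniformlyOn φs φ atTop (closure Ω))
    (hdetweak : ∀ w : (Fin 3 → ℝ) → ℝ, Measurable w → (∃ C, ∀ x, |w x| ≤ C) →
      Tendsto (fun k => ∫ x in Ω, Js k x * w x) atTop
        (𝓝 (∫ x in Ω, J x * w x)))
    (hbdry : volume (φ '' frontier Ω) = 0)
    (hCN : ∀ k, ∫ x in Ω, Js k x ≤ (volume (φs k '' Ω)).toReal) :
    ∫ x in Ω, J x ≤ (volume (φ '' Ω)).toReal := by
  have hΩ : IsCompact (closure Ω) := hΩbd.isCompact_closure
  have hJ : Tendsto (fun k => ∫ x in Ω, Js k x) atTop (𝓝 (∫ x in Ω, J x)) := by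
    simpa using hdetweak (fun _ => 1) measurable_const ⟨1, fun _ => by simp⟩
  have hφΩ : volume (φ '' Ω) ≠ ∞ := ((measure_mono (image_mono subset_closure)).trans_lt
    (hΩ.image_of_continuousOn hφcont).measure_lt_top).ne
  refine le_toReal_of_tendsto_of_limsup_le hJ hCN ?_ hφΩ
  calc limsup (fun k => volume (φs k '' Ω)) atTop
      ≤ limsup (fun k => volume (φs k '' closure Ω)) atTop :=
        limsup_le_limsup (.of_forall fun k => measure_mono (image_mono subset_closure))
    _ ≤ volume (φ '' closure Ω) := limsup_measure_image_le_of_tendstoUniformlyOn hΩ hφcont hunif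
    _ ≤ volume (φ '' Ω) := measure_image_closure_le_of_measure_image_frontier_eq_zero hbdry

/-- The Ciarlet–Nečas condition is preserved under weak `W^{1,p}`
convergence (`p > 3`). Weak convergence is encoded through its consequences:
uniform convergence `φ_k → φ` on `Ω̄` (compact embedding into `C(Ω̄)`) and weak
convergence of the Jacobian determinants `J_k = det ∇φ_k ⇀ J = det ∇φ`
(weak continuity of null Lagrangians), tested against bounded measurable
functions. If each `φ_k` satisfies `∫_Ω J_k ≤ |φ_k(Ω)|` and `|φ(∂Ω)| = 0`,
then `∫_Ω J ≤ |φ(Ω)|`. -/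
theorem ciarlet_necas_weakly_closed
    (Ω : Set (Fin 3 → ℝ)) (hΩopen : IsOpen Ω) (hΩbd : Bornology.IsBounded Ω)
    (p : ℝ) (hp : 3 < p)
    (φ : (Fin 3 → ℝ) → (Fin 3 → ℝ)) (φs : ℕ → (Fin 3 → ℝ) → (Fin 3 → ℝ))
    (hφcont : ContinuousOn φ (closure Ω))
    (hφscont : ∀ k, ContinuousOn (φs k) (closure Ω))
    (J : (Fin 3 → ℝ) → ℝ) (Js : ℕ → (Fin 3 → ℝ) → ℝ)
    (hJmeas : Measurable J) (hJsmeas : ∀ k, Measurable (Js k))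
    (hJint : IntegrableOn J Ω) (hJsint : ∀ k, IntegrableOn (Js k) Ω)
    (hunif : TendstoUniformlyOn φs φ atTop (closure Ω))
    (hdetweak : ∀ w : (Fin 3 → ℝ) → ℝ, Measurable w → (∃ C, ∀ x, |w x| ≤ C) →
      Tendsto (fun k => ∫ x in Ω, Js k x * w x) atTop
        (𝓝 (∫ x in Ω, J x * w x)))
    (hbdry : volume (φ '' frontier Ω) = 0)
    (hCN : ∀ k, ∫ x in Ω, Js k x ≤ (volume (φs k '' Ω)).toReal) :
    ∫ x in Ω, J x ≤ (volume (φ '' Ω)).toReal :=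
  ciarlet_necas_weakly_closed_general Ω hΩbd φ φs hφcont J Js hunif hdetweak hbdry hCN
end
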